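/- Let Y be finite, g : ℝ^Y → ℝ ∪ {+∞} convex with Δ(Y) ⊆ effdom(g), and for each p ∈ Δ(Y) let f_p be an extended subgradient of g at p. Define S(p,y) = g(p) + f_p(δ_y - p). Then S never takes value +∞, and S is proper: for all p, q ∈ Δ(Y), Σ_y q(y) S(p,y) ≤ Σ_y q(y) S(q,y), where sums involving -∞ are evaluated in ℝ ∪ {-∞} using 0·(-∞) = 0. -/
import Mathlib


/-- A *linear extended function*: scaling and additivity whenever the sum is legal. -/
def IsLinExt {E : Type*} [AddCommGroup E] [Module ℝ E] (f : E → EReal) : Prop :=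
  (∀ (α : ℝ) (x : E), f (α • x) = (α : EReal) * f x) ∧
  (∀ x x' : E, ¬ ((f x = ⊤ ∧ f x' = ⊥) ∨ (f x = ⊥ ∧ f x' = ⊤)) →
    f (x + x') = f x + f x')

/-- An *affine extended function*: a horizontally and vertically shifted linear extended fn. -/
def IsAffExt {E : Type*} [AddCommGroup E] [Module ℝ E] (h : E → EReal) : Prop :=
  ∃ (f : E → EReal) (x₀ : E) (β : ℝ), IsLinExt f ∧ ∀ x, h x = f (x - x₀) + (β : EReal)

section Aux

variable {E : Type*} [AddCommGroup E] [Module ℝ E]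

lemma linExt_zero {f : E → EReal} (hf : IsLinExt f) : f 0 = 0 := by
  have h := hf.1 0 0
  simpa using h

lemma ereal_coe_fsum {ι : Type*} (s : Finset ι) (r : ι → ℝ) :
    ((∑ i ∈ s, r i : ℝ) : EReal) = ∑ i ∈ s, (r i : EReal) := by
  induction s using Finset.cons_induction with
  | empty => simp
  | cons a s hi ih => rw [Finset.sum_cons, Finset.sum_cons, EReal.coe_add, ih]

lemma linExt_sum {f : E → EReal} (hf : IsLinExt f) {ι : Type*} (s : Finset ι) (x : ι → E)
    (h : ∀ i ∈ s, ∃ r : ℝ, f (x i) = (r : EReal)) :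
    f (∑ i ∈ s, x i) = ∑ i ∈ s, f (x i) := by
  induction s using Finset.cons_induction with
  | empty => simpa using linExt_zero hf
  | cons a s hi ih =>
    obtain ⟨r, hr⟩ := h a (Finset.mem_cons_self a s)
    rw [Finset.sum_cons, Finset.sum_cons,
      hf.2 _ _ (by rw [hr]; simp), ih (fun i hi' => h i (Finset.mem_cons_of_mem hi'))]

lemma ereal_sum_bot {ι : Type*} (s : Finset ι) (f : ι → EReal) {i : ι} (hi : i ∈ s)
    (h : f i = ⊥) : ∑ j ∈ s, f j = ⊥ := by
  classical
  rw [← Finset.add_sum_erase s f hi, h, EReal.bot_add]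

lemma ereal_add_ne_top {a b : EReal} (ha : a ≠ ⊤) (hb : b ≠ ⊤) : a + b ≠ ⊤ :=
  (EReal.add_lt_top ha hb).ne

end Aux

lemma single_mem_simplex (Y : Type*) [Fintype Y] [DecidableEq Y] (y : Y) :
    Pi.single y (1:ℝ) ∈ stdSimplex ℝ Y := by
  constructor
  · intro z
    rw [Pi.single_apply]
    split <;> norm_num
  · simp [Finset.sum_pi_single']
set_option maxHeartbeats 4000000 in
theorem stmt_18 (Y : Type*) [Fintype Y] [DecidableEq Y]
    (g : (Y → ℝ) → EReal) (hbot : ∀ x, g x ≠ ⊥)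
    (hconv : Convex ℝ {p : (Y → ℝ) × ℝ | g p.1 ≤ (p.2 : EReal)})
    (hdom : ∀ p ∈ stdSimplex ℝ Y, g p ≠ ⊤)
    (f : (Y → ℝ) → (Y → ℝ) → EReal)
    (hf : ∀ p ∈ stdSimplex ℝ Y, IsLinExt (f p) ∧ ∀ x, g p + f p (x - p) ≤ g x)
    (S : (Y → ℝ) → Y → EReal)
    (hS : ∀ p y, S p y = g p + f p (Pi.single y 1 - p)) :
    (∀ p ∈ stdSimplex ℝ Y, ∀ y, S p y ≠ ⊤) ∧
    (∀ p ∈ stdSimplex ℝ Y, ∀ q ∈ stdSimplex ℝ Y,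
      ∑ y, (q y : EReal) * S p y ≤ ∑ y, (q y : EReal) * S q y) := by
  classical
  -- Lemma A: directions inside the simplex have non-top subgradient value
  have hA : ∀ p ∈ stdSimplex ℝ Y, ∀ x ∈ stdSimplex ℝ Y, f p (x - p) ≠ ⊤ := by
    intro p hp x hx htop
    have hle := (hf p hp).2 x
    rw [htop, EReal.add_top_of_ne_bot (hbot p)] at hle
    exact hdom x hx (top_le_iff.mp hle)
  -- Lemma B: on the support, the subgradient value is not bot
  have hB : ∀ q ∈ stdSimplex ℝ Y, ∀ y, 0 < q y → f q (Pi.single y 1 - q) ≠ ⊥ := by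
    intro q hq y hy hbotv
    set ε := q y / 2 with hε
    have hεpos : 0 < ε := by positivity
    set x : Y → ℝ := q + (-ε) • (Pi.single y 1 - q) with hx
    have hxs : x ∈ stdSimplex ℝ Y := by
      constructor
      · intro z
        simp only [hx, Pi.add_apply, Pi.smul_apply, Pi.sub_apply, smul_eq_mul]
        rcases eq_or_ne z y with rfl | hzy
        · rw [Pi.single_eq_same]
          have hq1 : q z ≤ 1 := by
            calc q z ≤ ∑ w, q w := Finset.single_le_sum (fun w _ => hq.1 w) (Finset.mem_univ z)
            _ = 1 := hq.2
          nlinarith [hq.1 z]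
        · rw [Pi.single_eq_of_ne hzy]
          have := hq.1 z
          nlinarith
      · have : ∑ z, x z = (∑ z, q z) + (-ε) * ((∑ z, Pi.single y (1:ℝ) z) - ∑ z, q z) := by
          simp only [hx, Pi.add_apply, Pi.smul_apply, Pi.sub_apply, smul_eq_mul]
          rw [Finset.sum_add_distrib, ← Finset.mul_sum, Finset.sum_sub_distrib]
        rw [this, hq.2, Finset.sum_pi_single']
        simp
    have hxq : x - q = (-ε) • (Pi.single y 1 - q) := by
      simp [hx]
    have := hA q hq x hxs
    rw [hxq, (hf q hq).1.1 (-ε) _, hbotv] at this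
    exact this (EReal.mul_bot_of_neg (by exact_mod_cast neg_neg_of_pos hεpos))
  -- finiteness of g on the simplex
  have hgfin : ∀ p ∈ stdSimplex ℝ Y, ∃ c : ℝ, g p = (c : EReal) := by
    intro p hp
    lift g p to ℝ using ⟨hdom p hp, hbot p⟩ with c
    exact ⟨c, rfl⟩
  -- Part 1
  have h1 : ∀ p ∈ stdSimplex ℝ Y, ∀ y, S p y ≠ ⊤ := by
    intro p hp y
    rw [hS]
    exact ereal_add_ne_top (hdom p hp) (hA p hp _ (single_mem_simplex Y y))
  refine ⟨h1, ?_⟩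
  intro p hp q hq
  obtain ⟨cq, hcq⟩ := hgfin q hq
  -- combination identity
  have hcomb : ∀ r : Y → ℝ, ∑ y, q y • (Pi.single y (1:ℝ) - r) = q - r := by
    intro r
    funext z
    simp only [Finset.sum_apply, Pi.smul_apply, Pi.sub_apply, smul_eq_mul, Pi.single_apply,
      mul_sub]
    rw [Finset.sum_sub_distrib]
    have h1' : ∑ y : Y, q y * (if z = y then (1:ℝ) else 0) = q z := by
      simp [mul_ite]
    have h2' : ∑ y : Y, q y * r z = r z := by
      rw [← Finset.sum_mul, hq.2, one_mul]
    rw [h1', h2']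
  -- RHS equals g q
  have hRHS : ∑ y, (q y : EReal) * S q y = (cq : EReal) := by
    have hreal : ∀ y, ∃ r : ℝ, f q (q y • (Pi.single y (1:ℝ) - q)) = (r : EReal) := by
      intro y
      rw [(hf q hq).1.1]
      rcases eq_or_lt_of_le (hq.1 y) with h0 | hpos
      · exact ⟨0, by rw [← h0]; simp⟩
      · lift f q (Pi.single y 1 - q) to ℝ using
          ⟨hA q hq _ (single_mem_simplex Y y), hB q hq y hpos⟩ with r
        exact ⟨q y * r, by rw [EReal.coe_mul]⟩
    have hsum0 : ∑ y, f q (q y • (Pi.single y (1:ℝ) - q)) = 0 := by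
      rw [← linExt_sum (hf q hq).1 Finset.univ _ (fun y _ => hreal y), hcomb q, sub_self,
        linExt_zero (hf q hq).1]
    have hterm : ∀ y, (q y : EReal) * S q y
        = (q y : EReal) * (cq : EReal) + f q (q y • (Pi.single y (1:ℝ) - q)) := by
      intro y
      rw [hS, hcq, (hf q hq).1.1]
      rcases eq_or_lt_of_le (hq.1 y) with h0 | hpos
      · rw [← h0]; simp
      · lift f q (Pi.single y 1 - q) to ℝ using
          ⟨hA q hq _ (single_mem_simplex Y y), hB q hq y hpos⟩ with r
        rw [← EReal.coe_add, ← EReal.coe_mul, ← EReal.coe_mul, ← EReal.coe_mul, ← EReal.coe_add]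
        norm_num [mul_add]
    calc ∑ y, (q y : EReal) * S q y
        = ∑ y, ((q y : EReal) * (cq : EReal) + f q (q y • (Pi.single y (1:ℝ) - q))) :=
          Finset.sum_congr rfl (fun y _ => hterm y)
      _ = (∑ y, (q y : EReal) * (cq : EReal)) + ∑ y, f q (q y • (Pi.single y (1:ℝ) - q)) :=
          Finset.sum_add_distrib
      _ = (cq : EReal) := by
          rw [hsum0, add_zero]
          have : ∑ y, (q y : EReal) * (cq : EReal) = ((∑ y, q y * cq : ℝ) : EReal) := by
            rw [ereal_coe_fsum]; simp_rw [EReal.coe_mul]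
          rw [this, ← Finset.sum_mul, hq.2, one_mul]
  rw [hRHS]
  -- LHS ≤ g q
  by_cases hcase : ∃ y, 0 < q y ∧ f p (Pi.single y 1 - p) = ⊥
  · obtain ⟨y, hy, hb⟩ := hcase
    have : (q y : EReal) * S p y = ⊥ := by
      rw [hS, hb, EReal.add_bot]
      exact EReal.mul_bot_of_pos (by exact_mod_cast hy)
    rw [ereal_sum_bot Finset.univ _ (Finset.mem_univ y) this]
    exact bot_le
  · push_neg at hcase
    obtain ⟨cp, hcp⟩ := hgfin p hp
    have hreal : ∀ y, ∃ r : ℝ, f p (q y • (Pi.single y (1:ℝ) - p)) = (r : EReal) := by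
      intro y
      rw [(hf p hp).1.1]
      rcases eq_or_lt_of_le (hq.1 y) with h0 | hpos
      · exact ⟨0, by rw [← h0]; simp⟩
      · lift f p (Pi.single y 1 - p) to ℝ using
          ⟨hA p hp _ (single_mem_simplex Y y), hcase y hpos⟩ with r
        exact ⟨q y * r, by rw [EReal.coe_mul]⟩
    have hsum : ∑ y, f p (q y • (Pi.single y (1:ℝ) - p)) = f p (q - p) := by
      rw [← linExt_sum (hf p hp).1 Finset.univ _ (fun y _ => hreal y), hcomb p]
    have hterm : ∀ y, (q y : EReal) * S p y
        = (q y : EReal) * (cp : EReal) + f p (q y • (Pi.single y (1:ℝ) - p)) := by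
      intro y
      rw [hS, hcp, (hf p hp).1.1]
      rcases eq_or_lt_of_le (hq.1 y) with h0 | hpos
      · rw [← h0]; simp
      · lift f p (Pi.single y 1 - p) to ℝ using
          ⟨hA p hp _ (single_mem_simplex Y y), hcase y hpos⟩ with r
        rw [← EReal.coe_add, ← EReal.coe_mul, ← EReal.coe_mul, ← EReal.coe_mul, ← EReal.coe_add]
        norm_num [mul_add]
    have hLHS : ∑ y, (q y : EReal) * S p y = (cp : EReal) + f p (q - p) := by
      calc ∑ y, (q y : EReal) * S p y
          = ∑ y, ((q y : EReal) * (cp : EReal) + f p (q y • (Pi.single y (1:ℝ) - p))) :=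
            Finset.sum_congr rfl (fun y _ => hterm y)
        _ = (∑ y, (q y : EReal) * (cp : EReal)) + ∑ y, f p (q y • (Pi.single y (1:ℝ) - p)) :=
            Finset.sum_add_distrib
        _ = (cp : EReal) + f p (q - p) := by
            rw [hsum]
            congr 1
            have : ∑ y, (q y : EReal) * (cp : EReal) = ((∑ y, q y * cp : ℝ) : EReal) := by
              rw [ereal_coe_fsum]; simp_rw [EReal.coe_mul]
            rw [this, ← Finset.sum_mul, hq.2, one_mul]
    rw [hLHS, ← hcp, ← hcq]
    exact (hf p hp).2 q
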